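/- arXiv:1912.13292 — 9 statements merged into one kernel-verified Lean document; each statement's English description precedes it below -/
import Mathlib

section
/- Let (Ω, 𝒜) be a measurable space, let θ be a probability measure on it, let H_1, …, H_K be sets of probability measures on (Ω, 𝒜), and let E_1, …, E_K : Ω → [0,∞] be measurable functions such that for every k and every Q ∈ H_k, ∫ E_k dQ ≤ 1. Let I_θ := {k : θ ∈ H_k} and suppose E_θ := F(E_k : k ∈ I_θ) satisfies ∫ E_θ dθ ≤ 1 (as holds when F is a symmetric e-merging function), where F maps finite multisets of values in [0,∞] to [0,∞]. Fix a rejection set R ⊆ {1,…,K} and let g_R(θ) := |R \ I_θ|. Then for every positive integer j with g_R(θ) < j and every α > 1, the θ-probability of the event { ω : min_{I ⊆ {1,…,K} : |R \ I| < j} F(E_k(ω) : k ∈ I) ≥ α } is at most 1/α. In other words, the discovery e-vector evaluated at j = g_R(θ) + 1 is dominated pointwise by the e-variable E_θ, so it exceeds α with θ-probability at most 1/α. -/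
open scoped ENNReal
open MeasureTheory

/-- Validity of the discovery e-vector: if `g_R(θ) < j`, the discovery e-vector
at `j` is dominated by the e-variable `E_θ = F(E_k : k ∈ I_θ)`, and hence it is
at least `α > 1` with `θ`-probability at most `1/α`. -/
theorem discovery_e_vector_validity
    {Ω : Type*} [MeasurableSpace Ω] (K : ℕ)
    (θ : ProbabilityMeasure Ω)
    (H : Fin K → Set (ProbabilityMeasure Ω))
    (E : Fin K → Ω → ℝ≥0∞) (hmeas : ∀ k, Measurable (E k))
    (hE : ∀ k, ∀ Q ∈ H k, ∫⁻ ω, E k ω ∂(Q : Measure Ω) ≤ 1)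
    (Iθ : Finset (Fin K)) (hIθ : ∀ k, k ∈ Iθ ↔ θ ∈ H k)
    (F : Multiset ℝ≥0∞ → ℝ≥0∞)
    (hEθmeas : Measurable (fun ω => F (Iθ.val.map (fun k => E k ω))))
    (hEθ : ∫⁻ ω, F (Iθ.val.map (fun k => E k ω)) ∂(θ : Measure Ω) ≤ 1)
    (R : Finset (Fin K)) (j : ℕ) (hj : 0 < j) (hg : (R \ Iθ).card < j)
    (α : ℝ≥0∞) (hα : 1 < α) :
    (θ : Measure Ω)
        {ω | α ≤ ⨅ I ∈ {I : Finset (Fin K) | (R \ I).card < j},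
          F (I.val.map (fun k => E k ω))} ≤ 1 / α := by
  have hsub : {ω | α ≤ ⨅ I ∈ {I : Finset (Fin K) | (R \ I).card < j},
      F (I.val.map (fun k => E k ω))} ⊆
      {ω | α ≤ F (Iθ.val.map (fun k => E k ω))} := by
    intro ω hω
    simp only [Set.mem_setOf_eq] at hω ⊢
    refine le_trans hω ?_
    exact iInf₂_le Iθ hg
  calc (θ : Measure Ω) _ ≤ (θ : Measure Ω) {ω | α ≤ F (Iθ.val.map (fun k => E k ω))} :=
        measure_mono hsub
    _ ≤ 1 / α := by
        rw [ENNReal.le_div_iff_mul_le (Or.inr one_ne_zero) (Or.inr ENNReal.one_ne_top),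
          mul_comm]
        exact le_trans (mul_meas_ge_le_lintegral hEθmeas α) hEθ
end

section
/- For any n ≥ 1 and any e_1, …, e_n ∈ [0,∞], the Bonferroni value B(e_1,…,e_n) := (1/n) max_i e_i and the Simes value S(e_1,…,e_n) := max_{i ∈ {1,…,n}} (i · e_{[i]} / n), where e_{[1]} ≥ ⋯ ≥ e_{[n]} is the decreasing rearrangement of e_1,…,e_n, satisfy B(e_1,…,e_n) ≤ S(e_1,…,e_n) ≤ (1/n) ∑_{i=1}^n e_i. Consequently, if E_1, …, E_n are e-variables with respect to a probability measure Q, then both B(E_1,…,E_n) and S(E_1,…,E_n) are e-variables with respect to Q. -/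
open scoped ENNReal
open MeasureTheory

/-!
Bonferroni is dominated by the first Simes term, since `e_{[1]}` is the maximum. Each Simes term
is dominated by the mean, since the `i` largest values all dominate `e_{[i]}`, so
`i · e_{[i]} ≤ ∑ e_j`. Integrating the mean of e-variables gives at most `1`, and monotonicity of
the integral carries this down to Simes and Bonferroni.
-/

/-- The list of the values `v 0, …, v (n-1)` sorted in ascending order. -/
noncomputable def ascSortE {n : ℕ} (v : Fin n → ℝ≥0∞) : List ℝ≥0∞ :=
  (Multiset.map v Finset.univ.val).sort (· ≤ ·)

/-- The `i`-th largest value (`i` one-indexed, so `i = i₀ + 1` for `i₀ : Fin n`)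
among `v 0, …, v (n-1)`: the entry at position `n - 1 - i₀` of the ascending sort. -/
noncomputable def ithLargestE {n : ℕ} (v : Fin n → ℝ≥0∞) (i : Fin n) : ℝ≥0∞ :=
  (ascSortE v).getD (n - 1 - (i : ℕ)) 0

/-- The Simes e-merging function `S(e₁,…,eₙ) := max_i (i · e_{[i]} / n)`,
where `e_{[1]} ≥ ⋯ ≥ e_{[n]}` is the decreasing rearrangement. -/
noncomputable def simesE {n : ℕ} (v : Fin n → ℝ≥0∞) : ℝ≥0∞ :=
  ⨆ i : Fin n, (((i : ℕ) + 1 : ℕ) : ℝ≥0∞) * ithLargestE v i / n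

/-- The Bonferroni e-merging function `B(e₁,…,eₙ) := (1/n) max_i e_i`. -/
noncomputable def bonferroniE {n : ℕ} (v : Fin n → ℝ≥0∞) : ℝ≥0∞ :=
  (⨆ i, v i) / n

theorem List.Pairwise.length_sub_nsmul_getElem_le_sum {α : Type*} [AddCommMonoid α]
    [PartialOrder α] [CanonicallyOrderedAdd α] [IsOrderedAddMonoid α] {l : List α}
    (hl : l.Pairwise (· ≤ ·)) {k : ℕ} (hk : k < l.length) :
    (l.length - k) • l[k] ≤ l.sum := by
  have hdrop : ∀ x ∈ l.drop k, l[k] ≤ x := by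
    intro x hx
    rw [← List.head_drop (List.ne_nil_of_mem hx)]
    exact hl.drop.rel_head hx
  calc (l.length - k) • l[k] = (l.drop k).length • l[k] := by rw [List.length_drop]
    _ ≤ (l.drop k).sum := List.card_nsmul_le_sum _ _ hdrop
    _ ≤ (l.take k).sum + (l.drop k).sum := le_add_self
    _ = l.sum := List.sum_take_add_sum_drop l k

section SortedValues

variable {n : ℕ} (v : Fin n → ℝ≥0∞)

theorem length_ascSortE : (ascSortE v).length = n := by
  simp [ascSortE]

theorem pairwise_ascSortE : (ascSortE v).Pairwise (· ≤ ·) :=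
  Multiset.pairwise_sort _ _

theorem sum_ascSortE : (ascSortE v).sum = ∑ i, v i := by
  rw [Finset.sum, ← Multiset.sum_coe, ascSortE, Multiset.sort_eq]

theorem mem_ascSortE (j : Fin n) : v j ∈ ascSortE v := by
  simp [ascSortE]

theorem ithLargestE_eq_getElem (i : Fin n) :
    ithLargestE v i = (ascSortE v)[n - 1 - (i : ℕ)]'(by rw [length_ascSortE]; omega) :=
  List.getD_eq_getElem _ _ _

theorem le_ithLargestE_zero (j : Fin n) : v j ≤ ithLargestE v ⟨0, j.pos⟩ := by
  have hlast := (pairwise_ascSortE v).rel_getLast (mem_ascSortE v j)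
  simpa [ithLargestE_eq_getElem, List.getLast_eq_getElem, length_ascSortE] using hlast

theorem succ_mul_ithLargestE_le_sum (i : Fin n) :
    (((i : ℕ) + 1 : ℕ) : ℝ≥0∞) * ithLargestE v i ≤ ∑ j, v j := by
  have hk : n - 1 - (i : ℕ) < (ascSortE v).length := by rw [length_ascSortE]; omega
  have := (pairwise_ascSortE v).length_sub_nsmul_getElem_le_sum hk
  rwa [length_ascSortE, show n - (n - 1 - (i : ℕ)) = (i : ℕ) + 1 by omega, nsmul_eq_mul,
    sum_ascSortE, ← ithLargestE_eq_getElem] at this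

theorem bonferroniE_le_simesE : bonferroniE v ≤ simesE v := by
  rw [bonferroniE, ENNReal.iSup_div]
  refine iSup_le fun j => le_iSup_of_le ⟨0, j.pos⟩ ?_
  simpa using ENNReal.div_le_div_right (le_ithLargestE_zero v j) _

theorem simesE_le_mean : simesE v ≤ (∑ i, v i) / n :=
  iSup_le fun i => ENNReal.div_le_div_right (succ_mul_ithLargestE_le_sum v i) _

end SortedValues

theorem lintegral_sum_div_card_le_one {Ω ι : Type*} [MeasurableSpace Ω] [Fintype ι]
    {μ : Measure Ω} {E : ι → Ω → ℝ≥0∞} (hmeas : ∀ i, AEMeasurable (E i) μ)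
    (hE : ∀ i, ∫⁻ ω, E i ω ∂μ ≤ 1) :
    ∫⁻ ω, (∑ i, E i ω) / Fintype.card ι ∂μ ≤ 1 := by
  simp_rw [div_eq_mul_inv]
  rw [lintegral_mul_const'' _ (Finset.aemeasurable_fun_sum _ fun i _ => hmeas i),
    lintegral_finsetSum' _ fun i _ => hmeas i, ← div_eq_mul_inv]
  calc (∑ i, ∫⁻ ω, E i ω ∂μ) / Fintype.card ι ≤ (∑ _i : ι, 1) / Fintype.card ι := by
        gcongr with i; exact hE i
    _ ≤ 1 := by simp [ENNReal.div_self_le_one]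

theorem bonferroni_le_simes_le_mean_and_e_variables_general
    {Ω : Type*} [MeasurableSpace Ω] (Q : Measure Ω)
    (n : ℕ) (e : Fin n → ℝ≥0∞)
    (E : Fin n → Ω → ℝ≥0∞) (hmeas : ∀ i, Measurable (E i))
    (hE : ∀ i, ∫⁻ ω, E i ω ∂Q ≤ 1) :
    bonferroniE e ≤ simesE e ∧
    simesE e ≤ (∑ i, e i) / n ∧
    (∫⁻ ω, bonferroniE (fun i => E i ω) ∂Q ≤ 1) ∧
    (∫⁻ ω, simesE (fun i => E i ω) ∂Q ≤ 1) := by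
  have hmean : ∫⁻ ω, (∑ i, E i ω) / n ∂Q ≤ 1 := by
    simpa using lintegral_sum_div_card_le_one (fun i => (hmeas i).aemeasurable) hE
  have hsimes : ∫⁻ ω, simesE (fun i => E i ω) ∂Q ≤ 1 :=
    (lintegral_mono fun ω => simesE_le_mean _).trans hmean
  exact ⟨bonferroniE_le_simesE e, simesE_le_mean e,
    (lintegral_mono fun ω => bonferroniE_le_simesE _).trans hsimes, hsimes⟩

/-- `B(e₁,…,eₙ) ≤ S(e₁,…,eₙ) ≤ (1/n) ∑ e_i`; consequently, the Bonferroni and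
Simes functions applied to e-variables yield e-variables. -/
theorem bonferroni_le_simes_le_mean_and_e_variables
    {Ω : Type*} [MeasurableSpace Ω] (Q : Measure Ω) [IsProbabilityMeasure Q]
    (n : ℕ) (hn : 1 ≤ n) (e : Fin n → ℝ≥0∞)
    (E : Fin n → Ω → ℝ≥0∞) (hmeas : ∀ i, Measurable (E i))
    (hE : ∀ i, ∫⁻ ω, E i ω ∂Q ≤ 1) :
    bonferroniE e ≤ simesE e ∧
    simesE e ≤ (∑ i, e i) / n ∧
    (∫⁻ ω, bonferroniE (fun i => E i ω) ∂Q ≤ 1) ∧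
    (∫⁻ ω, simesE (fun i => E i ω) ∂Q ≤ 1) :=
  bonferroni_le_simes_le_mean_and_e_variables_general Q n e E hmeas hE
end

section
/- For any n ≥ 1 and any e_1, …, e_n ∈ [0,∞), let F(e) := (1/n) ∑_{i=1}^n e_i, S(e) := max_{i} (i e_{[i]}/n) with e_{[1]} ≥ ⋯ ≥ e_{[n]} the decreasing rearrangement, and B(e) := (1/n) max_i e_i. Then F(e) ≤ (∑_{k=1}^n 1/k) · S(e) ≤ (ln n + 1) · S(e), F(e) ≤ n · B(e), and S(e) ≤ n · B(e). -/
/-- The list of the values `v 0, …, v (n-1)` sorted in ascending order. -/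
noncomputable def ascSortR {n : ℕ} (v : Fin n → ℝ) : List ℝ :=
  (Multiset.map v Finset.univ.val).sort (· ≤ ·)

/-- The `i`-th largest value (`i` one-indexed, so `i = i₀ + 1` for `i₀ : Fin n`)
among `v 0, …, v (n-1)`: the entry at position `n - 1 - i₀` of the ascending sort. -/
noncomputable def ithLargestR {n : ℕ} (v : Fin n → ℝ) (i : Fin n) : ℝ :=
  (ascSortR v).getD (n - 1 - (i : ℕ)) 0

/-- The Simes e-merging function `S(e) := max_i (i · e_{[i]} / n)` where
`e_{[1]} ≥ ⋯ ≥ e_{[n]}` is the decreasing rearrangement. -/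
noncomputable def simesR {n : ℕ} (v : Fin n → ℝ) : ℝ :=
  ⨆ i : Fin n, ((i : ℕ) + 1 : ℝ) * ithLargestR v i / n

/-- The Bonferroni e-merging function `B(e) := (1/n) max_i e_i`. -/
noncomputable def bonferroniR {n : ℕ} (v : Fin n → ℝ) : ℝ :=
  (⨆ i, v i) / n

lemma ascSortR_length {n : ℕ} (v : Fin n → ℝ) : (ascSortR v).length = n := by
  simp [ascSortR]

lemma ascSortR_sum {n : ℕ} (v : Fin n → ℝ) : (ascSortR v).sum = ∑ i, v i := by
  rw [ascSortR, ← Multiset.sum_coe, Multiset.sort_eq]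
  rfl

lemma ithLargestR_mem {n : ℕ} (hn : 1 ≤ n) (v : Fin n → ℝ) (i : Fin n) :
    ∃ j, v j = ithLargestR v i := by
  have hlt : n - 1 - (i : ℕ) < (ascSortR v).length := by
    rw [ascSortR_length]; omega
  have : ithLargestR v i ∈ ascSortR v := by
    rw [ithLargestR, List.getD_eq_getElem _ _ hlt]
    exact List.getElem_mem hlt
  have : ithLargestR v i ∈ Multiset.map v Finset.univ.val := by
    rwa [ascSortR, Multiset.mem_sort] at this
  obtain ⟨j, _, hj⟩ := Multiset.mem_map.mp this
  exact ⟨j, hj⟩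

lemma sum_getD_eq {n : ℕ} (L : List ℝ) (h : L.length = n) :
    ∑ i : Fin n, L.getD (i : ℕ) 0 = L.sum := by
  subst h
  have : ∀ i : Fin L.length, L.getD i 0 = L.get i := fun i =>
    List.getD_eq_getElem L 0 i.isLt
  simp only [this]
  conv_rhs => rw [← List.ofFn_get L, List.sum_ofFn]

lemma sum_ithLargestR {n : ℕ} (hn : 1 ≤ n) (v : Fin n → ℝ) :
    ∑ i, ithLargestR v i = ∑ i, v i := by
  have h1 : ∑ i : Fin n, ithLargestR v i = ∑ i : Fin n, (ascSortR v).getD (i : ℕ) 0 := by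
    rw [← Equiv.sum_comp (Fin.revPerm : Equiv.Perm (Fin n))
      (fun i => (ascSortR v).getD (i : ℕ) 0)]
    refine Finset.sum_congr rfl fun i _ => ?_
    have : ((Fin.revPerm i : Fin n) : ℕ) = n - 1 - (i : ℕ) := by
      simp [Fin.val_rev]; omega
    rw [ithLargestR, this]
  rw [h1, ← ascSortR_sum v]
  exact sum_getD_eq (ascSortR v) (ascSortR_length v)

/-- Tight comparisons between the arithmetic mean `F`, the Simes function `S`
and the Bonferroni function `B`:
`F ≤ (∑_{k=1}^n 1/k)·S ≤ (ln n + 1)·S`, `F ≤ n·B`, and `S ≤ n·B`. -/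
theorem mean_simes_bonferroni_ratios
    (n : ℕ) (hn : 1 ≤ n) (e : Fin n → ℝ) (he : ∀ i, 0 ≤ e i) :
    (∑ i, e i) / n ≤ (∑ k ∈ Finset.range n, (1 : ℝ) / (k + 1)) * simesR e ∧
    (∑ k ∈ Finset.range n, (1 : ℝ) / (k + 1)) * simesR e ≤
      (Real.log n + 1) * simesR e ∧
    (∑ i, e i) / n ≤ n * bonferroniR e ∧
    simesR e ≤ n * bonferroniR e := by
  haveI : Nonempty (Fin n) := ⟨⟨0, hn⟩⟩
  have hn0 : (0 : ℝ) < n := by exact_mod_cast hn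
  have hith_nonneg : ∀ i, 0 ≤ ithLargestR e i := fun i => by
    obtain ⟨j, hj⟩ := ithLargestR_mem hn e i
    rw [← hj]; exact he j
  -- S bounds each term
  have hterm : ∀ i : Fin n, ((i : ℕ) + 1 : ℝ) * ithLargestR e i / n ≤ simesR e := fun i => by
    rw [simesR]
    exact le_ciSup (Set.Finite.bddAbove (Set.finite_range
      (fun j : Fin n => ((j : ℕ) + 1 : ℝ) * ithLargestR e j / n))) i
  have hS0 : 0 ≤ simesR e := by
    have h := hterm ⟨0, hn⟩
    have h0 : (0:ℝ) ≤ (((⟨0, hn⟩ : Fin n) : ℕ) + 1 : ℝ) * ithLargestR e ⟨0, hn⟩ / n := by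
      have := hith_nonneg ⟨0, hn⟩; positivity
    linarith
  -- sup of e
  have hsup : ∀ i, e i ≤ ⨆ j, e j := fun i =>
    le_ciSup (Set.Finite.bddAbove (Set.finite_range _)) i
  have hsup0 : 0 ≤ ⨆ j, e j := le_trans (he ⟨0, hn⟩) (hsup ⟨0, hn⟩)
  -- Part 1
  have h1 : (∑ i, e i) / n ≤ (∑ k ∈ Finset.range n, (1 : ℝ) / (k + 1)) * simesR e := by
    rw [div_le_iff₀ hn0]
    have key : ∑ i, e i ≤ ∑ i : Fin n, (n : ℝ) * simesR e * (1 / ((i : ℕ) + 1)) := by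
      rw [← sum_ithLargestR hn e]
      refine Finset.sum_le_sum fun i _ => ?_
      have h := hterm i
      rw [div_le_iff₀ hn0] at h
      have hi : (0 : ℝ) < (i : ℕ) + 1 := by positivity
      rw [mul_one_div, le_div_iff₀ hi]
      nlinarith [h]
    calc ∑ i, e i ≤ ∑ i : Fin n, (n : ℝ) * simesR e * (1 / ((i : ℕ) + 1)) := key
      _ = (∑ k ∈ Finset.range n, (1 : ℝ) / (k + 1)) * simesR e * n := by
          rw [Fin.sum_univ_eq_sum_range (fun k => (n : ℝ) * simesR e * (1 / ((k:ℕ) + 1))),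
            Finset.sum_mul, Finset.sum_mul]
          refine Finset.sum_congr rfl fun k _ => by push_cast; ring
  -- Part 2
  have hharm : (∑ k ∈ Finset.range n, (1 : ℝ) / (k + 1)) ≤ Real.log n + 1 := by
    have := harmonic_le_one_add_log n
    have hh : ((harmonic n : ℚ) : ℝ) = ∑ k ∈ Finset.range n, (1 : ℝ) / (k + 1) := by
      rw [harmonic]
      push_cast
      simp [one_div]
    linarith [hh ▸ this]
  have h2 : (∑ k ∈ Finset.range n, (1 : ℝ) / (k + 1)) * simesR e ≤
      (Real.log n + 1) * simesR e := mul_le_mul_of_nonneg_right hharm hS0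
  -- Part 3
  have hnb : (n : ℝ) * bonferroniR e = ⨆ j, e j := by
    rw [bonferroniR]; field_simp
  have h3 : (∑ i, e i) / n ≤ n * bonferroniR e := by
    rw [hnb, div_le_iff₀ hn0]
    calc ∑ i, e i ≤ ∑ _i : Fin n, ⨆ j, e j := Finset.sum_le_sum fun i _ => hsup i
      _ = (⨆ j, e j) * n := by simp [mul_comm]
  -- Part 4
  have h4 : simesR e ≤ n * bonferroniR e := by
    rw [hnb, simesR]
    refine ciSup_le fun i => ?_
    rw [div_le_iff₀ hn0]
    have hith_le : ithLargestR e i ≤ ⨆ j, e j := by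
      obtain ⟨j, hj⟩ := ithLargestR_mem hn e i
      rw [← hj]; exact hsup j
    have hi1 : ((i : ℕ) + 1 : ℝ) ≤ n := by exact_mod_cast i.isLt
    calc ((i : ℕ) + 1 : ℝ) * ithLargestR e i ≤ (n : ℝ) * (⨆ j, e j) :=
          mul_le_mul hi1 hith_le (hith_nonneg i) (le_of_lt hn0)
      _ = (⨆ j, e j) * n := mul_comm _ _
  exact ⟨h1, h2, h3, h4⟩
end

section
/- Let Q be a probability measure on a measurable space (Ω, 𝒜) and let P : Ω → [0,∞) be a p-variable with respect to Q, i.e., measurable with Q(P ≤ α) ≤ α for all α ∈ (0,1). Then for every κ ∈ (0,1], the function f_κ(P) := κ P^{κ−1} (with the convention f_κ(0) := ∞ for κ < 1, and values of P exceeding 1 truncated to 1) satisfies ∫ f_κ(P) dQ ≤ 1; that is, f_κ(p) = κ p^{κ−1} is a calibrator transforming p-values into e-values. -/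
open scoped ENNReal
open MeasureTheory Set Filter Topology

/-!
A p-variable `X` truncated at `1` is stochastically larger than a uniform variable on `(0, 1]`:
for every set `L` that is downward closed in `(0, 1]` (an initial segment ending at some `s`),
`Q (X ∈ L) ≤ Q (X ≤ s) ≤ s ≤ λ (L ∩ (0, 1])`. Since the superlevel sets of an antitone function
are of this kind, the layer-cake formula gives `∫ f(X) dQ ≤ ∫₀¹ f(u) du` for antitone `f ≥ 0`,
and `∫₀¹ κ u^(κ-1) du = 1`.
-/

section SuperUniform

variable {Ω : Type*} [MeasurableSpace Ω]

/-- The p-variable condition, also called super-uniformity. -/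
def IsSuperUniform (Q : Measure Ω) (X : Ω → ℝ) : Prop :=
  ∀ α : ℝ, 0 < α → α < 1 → Q {ω | X ω ≤ α} ≤ ENNReal.ofReal α

variable {Q : Measure Ω} {X : Ω → ℝ}

theorem IsSuperUniform.ae_pos (hX : IsSuperUniform Q X) : ∀ᵐ ω ∂Q, 0 < X ω := by
  simp_rw [ae_iff, not_lt]
  refine le_antisymm ?_ zero_le
  have hlim : Tendsto ENNReal.ofReal (𝓝[>] 0) (𝓝 0) := ENNReal.ofReal_zero ▸
    ENNReal.tendsto_ofReal (tendsto_id.mono_left nhdsWithin_le_nhds)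
  refine ge_of_tendsto hlim ?_
  filter_upwards [Ioo_mem_nhdsGT zero_lt_one] with α ⟨hα0, hα1⟩
  exact (measure_mono fun ω (hω : X ω ≤ 0) => hω.trans hα0.le).trans (hX α hα0 hα1)

theorem IsSuperUniform.min_one (hX : IsSuperUniform Q X) :
    IsSuperUniform Q fun ω => min (X ω) 1 := by
  intro α hα0 hα1
  convert hX α hα0 hα1 using 3 with ω
  simp [hα1.not_ge]

theorem IsSuperUniform.measure_preimage_le [IsProbabilityMeasure Q] (hX : IsSuperUniform Q X)
    (hX1 : ∀ᵐ ω ∂Q, X ω ≤ 1) {L : Set ℝ} (hL : ∀ u ∈ L ∩ Ioc 0 1, Ioc 0 u ⊆ L) :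
    Q (X ⁻¹' L) ≤ volume (L ∩ Ioc 0 1) := by
  have hXmem : ∀ᵐ ω ∂Q, X ω ∈ Ioc 0 1 := by
    filter_upwards [hX.ae_pos, hX1] with ω h0 h1 using ⟨h0, h1⟩
  rcases (L ∩ Ioc 0 1).eq_empty_or_nonempty with hempty | hne
  · refine le_of_eq_of_le (measure_eq_zero_iff_ae_notMem.2 ?_) zero_le
    filter_upwards [hXmem] with ω hω hωL
    exact hempty.subset ⟨hωL, hω⟩
  have hbdd : BddAbove (L ∩ Ioc 0 1) := ⟨1, fun u hu => hu.2.2⟩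
  set s := sSup (L ∩ Ioc 0 1)
  obtain ⟨u, hu⟩ := hne
  have hs0 : 0 < s := hu.2.1.trans_le (le_csSup hbdd hu)
  have hs1 : s ≤ 1 := csSup_le ⟨u, hu⟩ fun v hv => hv.2.2
  have hXs : Q {ω | X ω ≤ s} ≤ ENNReal.ofReal s := by
    rcases hs1.lt_or_eq with hs1 | hs1
    · exact hX s hs0 hs1
    · simpa [hs1] using prob_le_one
  have hIoo : Ioo 0 s ⊆ L ∩ Ioc 0 1 := fun v hv => by
    obtain ⟨w, hw, hvw⟩ := exists_lt_of_lt_csSup ⟨u, hu⟩ hv.2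
    exact ⟨hL w hw ⟨hv.1, hvw.le⟩, hv.1, hvw.le.trans hw.2.2⟩
  calc Q (X ⁻¹' L) ≤ Q {ω | X ω ≤ s} := by
        refine measure_mono_ae ?_
        filter_upwards [hXmem] with ω hω hωL
        exact le_csSup hbdd ⟨hωL, hω⟩
    _ ≤ ENNReal.ofReal s := hXs
    _ = volume (Ioo 0 s) := by rw [Real.volume_Ioo, sub_zero]
    _ ≤ volume (L ∩ Ioc 0 1) := measure_mono hIoo

theorem IsSuperUniform.lintegral_comp_le [IsProbabilityMeasure Q] (hX : IsSuperUniform Q X)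
    (hXm : Measurable X) (hX1 : ∀ᵐ ω ∂Q, X ω ≤ 1) {f : ℝ → ℝ} (hfm : Measurable f)
    (hf : AntitoneOn f (Ioc 0 1)) (hf0 : ∀ u ∈ Ioc 0 1, 0 ≤ f u) :
    ∫⁻ ω, ENNReal.ofReal (f (X ω)) ∂Q ≤ ∫⁻ u in Ioc 0 1, ENNReal.ofReal (f u) := by
  have hfX0 : 0 ≤ᵐ[Q] fun ω => f (X ω) := by
    filter_upwards [hX.ae_pos, hX1] with ω h0 h1 using hf0 _ ⟨h0, h1⟩
  have hf0' : 0 ≤ᵐ[volume.restrict (Ioc 0 1)] f := by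
    filter_upwards [ae_restrict_mem measurableSet_Ioc] with u hu using hf0 u hu
  rw [lintegral_eq_lintegral_meas_lt Q hfX0 (hfm.comp hXm).aemeasurable,
    lintegral_eq_lintegral_meas_lt _ hf0' hfm.aemeasurable]
  refine lintegral_mono fun t => ?_
  rw [Measure.restrict_apply (measurableSet_lt measurable_const hfm)]
  exact hX.measure_preimage_le hX1 fun u hu v hv => (hu.1 : t < f u).trans_le
    (hf ⟨hv.1, hv.2.trans hu.2.2⟩ hu.2 hv.2)

end SuperUniform

theorem lintegral_Ioc_mul_rpow_sub_one {κ : ℝ} (hκ : 0 < κ) :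
    ∫⁻ u in Ioc 0 1, ENNReal.ofReal (κ * u ^ (κ - 1)) = 1 := by
  have hint : IntervalIntegrable (fun u : ℝ => κ * u ^ (κ - 1)) volume 0 1 :=
    (intervalIntegral.intervalIntegrable_rpow' (by linarith)).const_mul κ
  rw [← ofReal_integral_eq_lintegral_ofReal hint.1, ← intervalIntegral.integral_of_le zero_le_one,
    intervalIntegral.integral_const_mul, integral_rpow (.inl (by linarith))]
  · simp [hκ.ne']
  · filter_upwards [ae_restrict_mem measurableSet_Ioc] with u hu
    exact mul_nonneg hκ.le (Real.rpow_nonneg hu.1.le _)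

theorem calibrator_kappa_general
    {Ω : Type*} [MeasurableSpace Ω] (Q : Measure Ω) [IsProbabilityMeasure Q]
    (P : Ω → ℝ) (hmeas : Measurable P)
    (hP : ∀ α : ℝ, 0 < α → α < 1 → Q {ω | P ω ≤ α} ≤ ENNReal.ofReal α)
    (κ : ℝ) (hκ : κ ∈ Set.Ioc (0 : ℝ) 1) :
    ∫⁻ ω, ENNReal.ofReal κ * ENNReal.ofReal (min (P ω) 1) ^ (κ - 1) ∂Q ≤ 1 := by
  obtain ⟨hκ0, hκ1⟩ := hκ
  have hX : IsSuperUniform Q fun ω => min (P ω) 1 := IsSuperUniform.min_one hP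
  calc ∫⁻ ω, ENNReal.ofReal κ * ENNReal.ofReal (min (P ω) 1) ^ (κ - 1) ∂Q
      = ∫⁻ ω, ENNReal.ofReal (κ * min (P ω) 1 ^ (κ - 1)) ∂Q := by
        refine lintegral_congr_ae ?_
        filter_upwards [hX.ae_pos] with ω hω
        rw [ENNReal.ofReal_rpow_of_pos hω, ENNReal.ofReal_mul hκ0.le]
    _ ≤ ∫⁻ u in Ioc 0 1, ENNReal.ofReal (κ * u ^ (κ - 1)) :=
        hX.lintegral_comp_le (hmeas.min measurable_const) (.of_forall fun _ => min_le_right _ _)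
          (measurable_const.mul (measurable_id.pow_const _))
          (fun u hu v hv huv => mul_le_mul_of_nonneg_left
            (Real.rpow_le_rpow_of_nonpos hu.1 huv (by linarith)) hκ0.le)
          fun u hu => mul_nonneg hκ0.le (Real.rpow_nonneg hu.1.le _)
    _ = 1 := lintegral_Ioc_mul_rpow_sub_one hκ0

/-- The functions `f_κ(p) := κ p^{κ-1}`, `κ ∈ (0,1]`, are calibrators: applied
to a p-variable `P` (with values exceeding 1 truncated to 1; note that in
`ℝ≥0∞` one has `0 ^ (κ-1) = ∞` for `κ < 1`, matching the convention
`f_κ(0) := ∞`), they produce an e-variable. -/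
theorem calibrator_kappa
    {Ω : Type*} [MeasurableSpace Ω] (Q : Measure Ω) [IsProbabilityMeasure Q]
    (P : Ω → ℝ) (hmeas : Measurable P) (hP0 : ∀ ω, 0 ≤ P ω)
    (hP : ∀ α : ℝ, 0 < α → α < 1 → Q {ω | P ω ≤ α} ≤ ENNReal.ofReal α)
    (κ : ℝ) (hκ : κ ∈ Set.Ioc (0 : ℝ) 1) :
    ∫⁻ ω, ENNReal.ofReal κ * ENNReal.ofReal (min (P ω) 1) ^ (κ - 1) ∂Q ≤ 1 :=
  calibrator_kappa_general Q P hmeas hP κ hκ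
end

section
/- For every p ∈ (0,1], the supremum over κ ∈ (0,1] of κ p^{κ−1} equals −exp(−1)/(p ln p) if p ≤ exp(−1), and equals 1 if p > exp(−1). (This supremum is the Vovk–Sellke bound VS(p).) -/
/-!
Put `t = -κ log p`. Then `κ p^(κ-1) = t e^(-t) / (-p log p)`, and `t e^(-t) ≤ e^(-1)` with
equality at `t = 1`, i.e. at `κ = -1 / log p`; this `κ` lies in `(0,1]` exactly when
`p ≤ e^(-1)`. For `p ≥ e^(-1)` the base can be lowered to `e^(-1)`, since the exponent `κ - 1`
is nonpositive, giving `κ p^(κ-1) ≤ κ e^(1-κ) ≤ 1`, the value at `κ = 1`.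
-/

open Real Set

theorem IsMaxOn.biSup_eq {α β : Type*} [ConditionallyCompleteLinearOrder α] {f : β → α}
    {s : Set β} {x₀ : β} (hx₀ : x₀ ∈ s) (h : IsMaxOn f s x₀) (h₀ : sSup ∅ ≤ f x₀) :
    ⨆ x ∈ s, f x = f x₀ := by
  have hbdd : BddAbove (range fun x : s ↦ f x) := ⟨f x₀, by rintro _ ⟨x, rfl⟩; exact h x.2⟩
  rw [← ciSup_subtype_fun hbdd, h.iSup_eq hx₀]
  rwa [h.iSup_eq hx₀]

theorem mul_rpow_sub_one_eq {p : ℝ} (hp : 0 < p) (hlog : log p ≠ 0) (κ : ℝ) :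
    κ * p ^ (κ - 1) = (-log p * κ) * exp (-(-log p * κ)) / -(p * log p) := by
  rw [rpow_def_of_pos hp, mul_sub, mul_one, exp_sub, exp_log hp, neg_mul, neg_neg]
  field_simp

theorem mul_rpow_sub_one_le {p : ℝ} (hp0 : 0 < p) (hp1 : p < 1) (κ : ℝ) :
    κ * p ^ (κ - 1) ≤ -exp (-1) / (p * log p) := by
  have hlog : log p < 0 := log_neg hp0 hp1
  rw [mul_rpow_sub_one_eq hp0 hlog.ne, neg_div, ← div_neg]
  exact div_le_div_of_nonneg_right (mul_exp_neg_le_exp_neg_one _)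
    (neg_nonneg.mpr (mul_neg_of_pos_of_neg hp0 hlog).le)

theorem neg_inv_log_mul_rpow_sub_one {p : ℝ} (hp : 0 < p) (hlog : log p ≠ 0) :
    -(log p)⁻¹ * p ^ (-(log p)⁻¹ - 1) = -exp (-1) / (p * log p) := by
  rw [mul_rpow_sub_one_eq hp hlog, show -log p * -(log p)⁻¹ = 1 by field_simp, one_mul, div_neg,
    neg_div]

theorem mul_rpow_sub_one_le_one {p κ : ℝ} (hp : exp (-1) ≤ p) (hκ0 : 0 ≤ κ) (hκ1 : κ ≤ 1) :
    κ * p ^ (κ - 1) ≤ 1 := by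
  have hpow : p ^ (κ - 1) ≤ exp (-1) ^ (κ - 1) :=
    rpow_le_rpow_of_nonpos (exp_pos _) hp (by linarith)
  calc κ * p ^ (κ - 1) ≤ κ * exp (-1) ^ (κ - 1) := by gcongr
    _ = κ * exp (-κ) / exp (-1) := by
      rw [← exp_mul, mul_div_assoc, ← exp_sub]; ring_nf
    _ ≤ 1 := by
      rw [div_le_one (exp_pos _)]; exact mul_exp_neg_le_exp_neg_one κ

/-- The Vovk–Sellke bound: for `p ∈ (0,1]`,
`sup_{κ ∈ (0,1]} κ p^{κ-1} = -exp(-1)/(p ln p)` if `p ≤ exp(-1)`, and `= 1`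
otherwise. -/
theorem vovk_sellke_bound (p : ℝ) (hp : p ∈ Set.Ioc (0 : ℝ) 1) :
    (⨆ κ ∈ Set.Ioc (0 : ℝ) 1, κ * p ^ (κ - 1)) =
      if p ≤ Real.exp (-1) then -Real.exp (-1) / (p * Real.log p) else 1 := by
  have hp0 : 0 < p := hp.1
  split_ifs with hpe
  · have hlog : log p ≤ -1 := by simpa using log_le_log hp0 hpe
    have hκ₀ : -(log p)⁻¹ ∈ Ioc (0 : ℝ) 1 :=
      ⟨by simp only [neg_pos, inv_lt_zero]; linarith,
        by rw [neg_inv]; exact inv_le_one_of_one_le₀ (by linarith)⟩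
    have hmax := neg_inv_log_mul_rpow_sub_one hp0 (by linarith)
    rw [← hmax]
    refine IsMaxOn.biSup_eq hκ₀ (isMaxOn_iff.mpr fun κ _ ↦ ?_) ?_
    · exact hmax ▸ mul_rpow_sub_one_le hp0 (hpe.trans_lt (exp_lt_one_iff.mpr (by norm_num))) κ
    · exact Real.sSup_empty.trans_le (mul_nonneg hκ₀.1.le (rpow_nonneg hp0.le _))
  · refine (IsMaxOn.biSup_eq (right_mem_Ioc.mpr one_pos)
      (isMaxOn_iff.mpr fun κ hκ ↦ ?_) ?_).trans ?_
    · simpa using mul_rpow_sub_one_le_one (not_le.mp hpe).le hκ.1.le hκ.2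
    all_goals simp
end

section
/- Let Q be a probability measure on a measurable space (Ω, 𝒜) and let E : Ω → [0,∞] be an e-variable with respect to Q, i.e., measurable with ∫ E dQ ≤ 1. Then P := min(1, 1/E) (with 1/∞ := 0) is a p-variable with respect to Q: for every α ∈ (0,1), Q(min(1, 1/E) ≤ α) ≤ α. Hence t ↦ min(1, 1/t) is an e-to-p calibrator. -/
open scoped ENNReal
open MeasureTheory

/-- `t ↦ min(1, 1/t)` is an e-to-p calibrator: if `E` is an e-variable with
respect to `Q`, then, for every `α ∈ (0,1)`,
`Q(min(1, 1/E) ≤ α) ≤ α` (in `ℝ≥0∞` one has `1/∞ = 0`). -/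
theorem e_to_p_calibrator
    {Ω : Type*} [MeasurableSpace Ω] (Q : Measure Ω) [IsProbabilityMeasure Q]
    (E : Ω → ℝ≥0∞) (hmeas : Measurable E) (hE : ∫⁻ ω, E ω ∂Q ≤ 1)
    (α : ℝ≥0∞) (hα0 : 0 < α) (hα1 : α < 1) :
    Q {ω | min 1 (E ω)⁻¹ ≤ α} ≤ α := by
  have hset : {ω | min 1 (E ω)⁻¹ ≤ α} = {ω | α⁻¹ ≤ E ω} := by
    ext ω
    simp only [Set.mem_setOf_eq, min_le_iff]
    constructor
    · rintro (h | h)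
      · exact absurd (lt_of_le_of_lt h hα1) (lt_irrefl _)
      · exact ENNReal.inv_le_iff_inv_le.mp h
    · intro h
      exact Or.inr (ENNReal.inv_le_iff_inv_le.mpr h)
  rw [hset]
  have hmarkov := mul_meas_ge_le_lintegral₀ (μ := Q) hmeas.aemeasurable α⁻¹
  have h1 : α⁻¹ * Q {ω | α⁻¹ ≤ E ω} ≤ 1 := hmarkov.trans hE
  calc Q {ω | α⁻¹ ≤ E ω} = α * (α⁻¹ * Q {ω | α⁻¹ ≤ E ω}) := by
        rw [← mul_assoc, ENNReal.mul_inv_cancel hα0.ne' (hα1.trans ENNReal.one_lt_top).ne,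
          one_mul]
    _ ≤ α * 1 := by exact mul_le_mul_right h1 α
    _ = α := mul_one α
end

section
/- Let B ≥ 1 and let T_0, T_1, …, T_B be exchangeable nonnegative integrable random variables on a probability space, i.e., the joint distribution of (T_0, …, T_B) is invariant under every permutation of the indices {0, 1, …, B}. Define the conformal e-value e := T_0 / ( (1/(B+1)) ∑_{b=0}^B T_b ), with the convention that the ratio equals 1 on the event where ∑_{b=0}^B T_b = 0. Then E[e] = 1; in particular, e is an e-variable. -/
/-!
Write `S = ∑_b T_b` and `e_i = T_i / (S / (B+1))` (and `e_i = 1` where `S = 0`). Pointwise the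
`e_i` sum to `B + 1`, and they are bounded by `B + 1` since the `T_b` are nonnegative. A
transposition of the indices carries `e_i` to `e_0` and, by exchangeability, preserves the law
of `(T_b)_b`, so all the `e_i` have the same expectation, which must therefore be `1`.
-/

open MeasureTheory ProbabilityTheory

section ConformalScore

variable {ι : Type*} [Fintype ι]

noncomputable def conformalScore (x : ι → ℝ) (i : ι) : ℝ :=
  if ∑ b, x b = 0 then 1
  else x i / ((1 / (Fintype.card ι : ℝ)) * ∑ b, x b)

theorem measurable_conformalScore (i : ι) :
    Measurable fun x : ι → ℝ => conformalScore x i := by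
  have hsum : Measurable fun x : ι → ℝ => ∑ b, x b :=
    Finset.measurable_sum _ fun b _ => measurable_pi_apply b
  exact Measurable.ite (hsum (measurableSet_singleton 0)) measurable_const
    ((measurable_pi_apply i).div (measurable_const.mul hsum))

theorem conformalScore_comp_perm (σ : Equiv.Perm ι) (x : ι → ℝ) (i : ι) :
    conformalScore (x ∘ σ) i = conformalScore x (σ i) := by
  simp only [conformalScore, Function.comp_apply, Equiv.sum_comp σ x]

theorem sum_conformalScore [Nonempty ι] (x : ι → ℝ) :
    ∑ i, conformalScore x i = Fintype.card ι := by
  have hcard : (Fintype.card ι : ℝ) ≠ 0 := Nat.cast_ne_zero.mpr Fintype.card_ne_zero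
  by_cases hx : ∑ b, x b = 0
  · simp [conformalScore, hx]
  · simp only [conformalScore, hx, if_false, ← Finset.sum_div]
    field_simp

theorem abs_conformalScore_le {x : ι → ℝ} (hx : ∀ b, 0 ≤ x b) (i : ι) :
    |conformalScore x i| ≤ Fintype.card ι := by
  unfold conformalScore
  split_ifs with hzero
  · rw [abs_one, Nat.one_le_cast]
    exact Fintype.card_pos_iff.mpr ⟨i⟩
  · have hpos : 0 < ∑ b, x b := (Finset.sum_nonneg fun b _ => hx b).lt_of_ne' hzero
    have hcard : (0 : ℝ) < Fintype.card ι := Nat.cast_pos.mpr (Fintype.card_pos_iff.mpr ⟨i⟩)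
    rw [abs_of_nonneg (div_nonneg (hx i) (by positivity)), div_le_iff₀ (by positivity),
      one_div, ← mul_assoc, mul_inv_cancel₀ hcard.ne', one_mul]
    exact Finset.single_le_sum (fun b _ => hx b) (Finset.mem_univ i)

end ConformalScore

section Exchangeable

variable {Ω ι : Type*} [MeasurableSpace Ω] {μ : Measure Ω} {X : ι → Ω → ℝ}

def Exchangeable (X : ι → Ω → ℝ) (μ : Measure Ω) : Prop :=
  ∀ σ : Equiv.Perm ι, μ.map (fun ω i => X (σ i) ω) = μ.map (fun ω i => X i ω)

theorem Exchangeable.identDistrib_perm (hX : Exchangeable X μ) (hmeas : ∀ i, Measurable (X i))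
    (σ : Equiv.Perm ι) :
    IdentDistrib (fun ω i => X (σ i) ω) (fun ω i => X i ω) μ μ where
  aemeasurable_fst := (measurable_pi_lambda _ fun i => hmeas (σ i)).aemeasurable
  aemeasurable_snd := (measurable_pi_lambda _ hmeas).aemeasurable
  map_eq := hX σ

variable [Fintype ι] [DecidableEq ι]

theorem Exchangeable.integral_conformalScore_eq (hX : Exchangeable X μ)
    (hmeas : ∀ i, Measurable (X i)) (i j : ι) :
    ∫ ω, conformalScore (fun b => X b ω) i ∂μ =
      ∫ ω, conformalScore (fun b => X b ω) j ∂μ := by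
  have hswap : ∀ ω, conformalScore (fun b => X b ω) i =
      conformalScore (fun b => X (Equiv.swap i j b) ω) j := fun ω => by
    have h := conformalScore_comp_perm (Equiv.swap i j) (fun b => X b ω) j
    rw [Equiv.swap_apply_right] at h
    exact h.symm
  simp_rw [hswap]
  exact ((hX.identDistrib_perm hmeas _).comp (measurable_conformalScore j)).integral_eq

theorem Exchangeable.integral_conformalScore_eq_one [IsProbabilityMeasure μ]
    (hX : Exchangeable X μ) (hmeas : ∀ i, Measurable (X i)) (hnonneg : ∀ i ω, 0 ≤ X i ω)
    (i : ι) : ∫ ω, conformalScore (fun b => X b ω) i ∂μ = 1 := by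
  have : Nonempty ι := ⟨i⟩
  have hint : ∀ j, Integrable (fun ω => conformalScore (fun b => X b ω) j) μ := fun j =>
    .of_bound
      ((measurable_conformalScore j).comp (measurable_pi_lambda _ hmeas)).aestronglyMeasurable
      (Fintype.card ι) (ae_of_all μ fun ω => abs_conformalScore_le (fun b => hnonneg b ω) j)
  have hsum : (Fintype.card ι : ℝ) * ∫ ω, conformalScore (fun b => X b ω) i ∂μ =
      Fintype.card ι :=
    calc (Fintype.card ι : ℝ) * ∫ ω, conformalScore (fun b => X b ω) i ∂μ
        = ∑ j, ∫ ω, conformalScore (fun b => X b ω) j ∂μ := by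
          simp [hX.integral_conformalScore_eq hmeas _ i]
      _ = ∫ ω, ∑ j, conformalScore (fun b => X b ω) j ∂μ :=
          (integral_finsetSum _ fun j _ => hint j).symm
      _ = Fintype.card ι := by simp [sum_conformalScore]
  exact (mul_eq_left₀ (Nat.cast_ne_zero.mpr Fintype.card_ne_zero)).mp hsum

end Exchangeable

theorem conformal_e_value_expectation_one_general
    {Ω : Type*} [MeasurableSpace Ω] (μ : Measure Ω) [IsProbabilityMeasure μ]
    (B : ℕ) (T : Fin (B + 1) → Ω → ℝ)
    (hmeas : ∀ b, Measurable (T b))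
    (hnonneg : ∀ b ω, 0 ≤ T b ω)
    (hexch : ∀ σ : Equiv.Perm (Fin (B + 1)),
      Measure.map (fun ω => fun i => T (σ i) ω) μ =
        Measure.map (fun ω => fun i => T i ω) μ) :
    ∫ ω, (if (∑ b, T b ω) = 0 then 1
      else T 0 ω / ((1 / ((B : ℝ) + 1)) * ∑ b, T b ω)) ∂μ = 1 := by
  have h := Exchangeable.integral_conformalScore_eq_one hexch hmeas hnonneg 0
  simpa [conformalScore] using h

/-- The conformal e-value has expectation 1: if `T 0, …, T B` are exchangeable
nonnegative integrable random variables, then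
`E[ T 0 / ((1/(B+1)) ∑_b T b) ] = 1`, with the convention that the ratio is 1
on the event where `∑_b T b = 0`. -/
theorem conformal_e_value_expectation_one
    {Ω : Type*} [MeasurableSpace Ω] (μ : Measure Ω) [IsProbabilityMeasure μ]
    (B : ℕ) (hB : 1 ≤ B) (T : Fin (B + 1) → Ω → ℝ)
    (hmeas : ∀ b, Measurable (T b))
    (hnonneg : ∀ b ω, 0 ≤ T b ω)
    (hint : ∀ b, Integrable (T b) μ)
    (hexch : ∀ σ : Equiv.Perm (Fin (B + 1)),
      Measure.map (fun ω => fun i => T (σ i) ω) μ =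
        Measure.map (fun ω => fun i => T i ω) μ) :
    ∫ ω, (if (∑ b, T b ω) = 0 then 1
      else T 0 ω / ((1 / ((B : ℝ) + 1)) * ∑ b, T b ω)) ∂μ = 1 :=
  conformal_e_value_expectation_one_general μ B T hmeas hnonneg hexch
end

section
/- Let K ≥ 1, fix p_1, …, p_K ∈ [0,1], let F be a function assigning a value in [0,1] to each finite non-empty multiset of values in [0,1], and fix α ∈ [0,1]. Define 𝒰 := { I ⊆ {1,…,K} : I ≠ ∅ and F(p_i : i ∈ I) ≤ α }, 𝒳 := { I ⊆ {1,…,K} : every J with I ⊆ J ⊆ {1,…,K} and J ≠ ∅ belongs to 𝒰 }, t_α(R) := max{ |I| : I ⊆ R, I ∉ 𝒳 } (with max ∅ := 0 if every subset of R is in 𝒳), f_α(R) := |R| − t_α(R), and D_{p,F}^R(j) := max_{I ⊆ {1,…,K} : |R \ I| < j} F(p_i : i ∈ I). Then for every rejection set R ⊆ {1,…,K} and every j ∈ {1, …, |R|}: f_α(R) ≥ j if and only if D_{p,F}^R(j) ≤ α. -/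
open scoped ENNReal

/-- Equivalence between Goeman–Solari's lower bound `f_α(R)` on the number of
true discoveries and the discovery p-vector `D_{p,F}^R`:
`f_α(R) ≥ j ↔ D_{p,F}^R(j) ≤ α`.  Here `𝒰` is the family of non-empty index
sets `I` with `F(p_i : i ∈ I) ≤ α`, `𝒳` is the family of index sets rejected
by closed testing (all non-empty supersets are in `𝒰`),
`t_α(R) := max{|I| : I ⊆ R, I ∉ 𝒳}` (with `max ∅ := 0`),
`f_α(R) := |R| − t_α(R)`, and
`D_{p,F}^R(j) := max_{I : |R \ I| < j} F(p_i : i ∈ I)`. -/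
theorem gwgs_true_discoveries_iff
    (K : ℕ) (hK : 1 ≤ K) (p : Fin K → ℝ≥0∞) (hp : ∀ k, p k ≤ 1)
    (F : Multiset ℝ≥0∞ → ℝ≥0∞) (hF : ∀ s, F s ≤ 1)
    (α : ℝ≥0∞) (hα : α ≤ 1)
    (R : Finset (Fin K)) (j : ℕ) (hj1 : 1 ≤ j) (hjR : j ≤ R.card) :
    (j ≤ R.card - sSup {m : ℕ | ∃ I : Finset (Fin K), I ⊆ R ∧
        ¬ (∀ J : Finset (Fin K), I ⊆ J → J.Nonempty → F (J.val.map p) ≤ α) ∧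
        I.card = m}) ↔
      (⨆ I ∈ {I : Finset (Fin K) | (R \ I).card < j}, F (I.val.map p)) ≤ α := by
  set S : Set ℕ := {m : ℕ | ∃ I : Finset (Fin K), I ⊆ R ∧
        ¬ (∀ J : Finset (Fin K), I ⊆ J → J.Nonempty → F (J.val.map p) ≤ α) ∧
        I.card = m} with hSdef
  have hbdd : BddAbove S := by
    refine ⟨K, ?_⟩
    rintro m ⟨I, hIR, _, rfl⟩
    simpa using (Finset.card_le_univ I).trans_eq (by simp)
  rw [iSup₂_le_iff]
  constructor
  · intro h I hI
    simp only [Set.mem_setOf_eq] at hI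
    -- hI : (R \ I).card < j
    have hcard : (R ∩ I).card + (R \ I).card = R.card :=
      Finset.card_inter_add_card_sdiff R I
    have hnotS : (R ∩ I).card ∉ S := by
      intro hmem
      have h1 : (R ∩ I).card ≤ sSup S := le_csSup hbdd hmem
      have h2 : sSup S ≤ R.card - j := by omega
      omega
    have hX : ∀ J : Finset (Fin K), R ∩ I ⊆ J → J.Nonempty → F (J.val.map p) ≤ α := by
      by_contra hc
      exact hnotS ⟨R ∩ I, Finset.inter_subset_left, hc, rfl⟩
    have hIne : I.Nonempty := by
      have : 0 < (R ∩ I).card := by omega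
      exact Finset.Nonempty.mono Finset.inter_subset_right (Finset.card_pos.mp this)
    exact hX I Finset.inter_subset_right hIne
  · intro h
    have hb : sSup S ≤ R.card - j := by
      apply csSup_le'
      rintro m ⟨I, hIR, hI, rfl⟩
      by_contra hc
      push_neg at hc
      have hIle : I.card ≤ R.card := Finset.card_le_card hIR
      apply hI
      intro J hIJ hJne
      have hsub : R \ J ⊆ R \ I := Finset.sdiff_subset_sdiff le_rfl hIJ
      have h1 : (R \ I).card = R.card - I.card := Finset.card_sdiff_of_subset hIR
      have h2 : (R \ J).card ≤ (R \ I).card := Finset.card_le_card hsub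
      exact h J (by simp only [Set.mem_setOf_eq]; omega)
    omega
end

section
/- Let K ≥ 2 and let e_1 ≤ e_2 ≤ ⋯ ≤ e_K be values in [0,∞] sorted in ascending order. Let F be a function on finite multisets of values in [0,∞] that is symmetric and increasing in each argument, and define D_{e,F}^R(j) := min_{I ⊆ {1,…,K} : |R \ I| < j} F(e_k : k ∈ I) with min ∅ := ∞. For r ∈ {1,…,K} let R_r := {K−r+1, …, K} be the set of the r indices with the largest e-values. Then for every r, every rejection set R ⊆ {1,…,K} with |R| = r, and every positive integer j, D_{e,F}^R(j) ≤ D_{e,F}^{R_r}(j); that is, R_r is the optimal rejection set of size r. -/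
/-!
Exchanging an index `x ∈ R` for an index `y ∉ R` with `e x ≤ e y` can only increase `D^R(j)`:
a competitor `I` for the new set either is already a competitor for `R`, or, when it contains `y`
but not `x`, its image under the transposition `(x y)` is one, and it has pointwise smaller
e-values. Repeating such exchanges turns any `R` into the top set `R_r`.
-/

open Finset
open scoped ENNReal

variable {α β γ : Type*} [DecidableEq α] [Preorder β] [CompleteLattice γ]

/-- `D_{e,F}^R(j)`; the empty infimum is `⊤`. -/
def discoveryEvidence (e : α → β) (F : Multiset β → γ) (R : Finset α) (j : ℕ) : γ :=
  ⨅ I ∈ {I : Finset α | #(R \ I) < j}, F (I.val.map e)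

namespace Finset

theorem card_sdiff_le_card_map_swap_sdiff {R I : Finset α} {x y : α} (hx : x ∈ R) (hy : y ∉ R)
    (hxy : x ∈ I ∨ y ∉ I) : #(R \ I) ≤ #(R.map (Equiv.swap x y).toEmbedding \ I) := by
  refine card_le_card_of_injOn (Equiv.swap x y) (fun z hz => ?_) (Equiv.injective _).injOn
  simp only [coe_sdiff, Set.mem_sdiff, mem_coe, mem_map_equiv, Equiv.symm_swap,
    Equiv.swap_apply_self] at hz ⊢
  refine ⟨hz.1, ?_⟩
  by_cases hzx : z = x
  · subst hzx
    simpa [hz.2] using hxy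
  · rw [Equiv.swap_apply_of_ne_of_ne hzx (ne_of_mem_of_not_mem hz.1 hy)]
    exact hz.2

end Finset

theorem discoveryEvidence_le_map_swap (e : α → β) {F : Multiset β → γ}
    (hF : ∀ s t : Multiset β, Multiset.Rel (· ≤ ·) s t → F s ≤ F t)
    {R : Finset α} {x y : α} (hx : x ∈ R) (hy : y ∉ R) (hxy : e x ≤ e y) (j : ℕ) :
    discoveryEvidence e F R j ≤
      discoveryEvidence e F (R.map (Equiv.swap x y).toEmbedding) j := by
  set σ := Equiv.swap x y
  refine le_iInf₂ fun I (hI : #(R.map σ.toEmbedding \ I) < j) => ?_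
  by_cases hxy' : x ∈ I ∨ y ∉ I
  · exact iInf₂_le_of_le I ((card_sdiff_le_card_map_swap_sdiff hx hy hxy').trans_lt hI) le_rfl
  obtain ⟨hxI, hyI⟩ : x ∉ I ∧ y ∈ I := by simpa only [not_or, not_not] using hxy'
  have hcompetitor : #(R \ I.map σ.toEmbedding) < j := by
    refine lt_of_le_of_lt (card_le_card fun z hz => ?_) hI
    simp only [mem_sdiff, mem_map_equiv] at hz ⊢
    have hzx : z ≠ x := by rintro rfl; exact hz.2 (by simpa [σ] using hyI)
    have hzy : z ≠ y := ne_of_mem_of_not_mem hz.1 hy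
    simpa [σ, Equiv.swap_apply_of_ne_of_ne hzx hzy] using hz
  have hsmaller : Multiset.Rel (· ≤ ·) ((I.map σ.toEmbedding).val.map e) (I.val.map e) := by
    rw [map_val, Multiset.map_map, Multiset.rel_map]
    refine Multiset.rel_refl_of_refl_on fun z hz => ?_
    by_cases hzy : z = y
    · simpa [σ, hzy] using hxy
    · have hzx : z ≠ x := by rintro rfl; exact hxI hz
      simp [σ, Equiv.swap_apply_of_ne_of_ne hzx hzy]
  exact iInf₂_le_of_le _ hcompetitor (hF _ _ hsmaller)

theorem discoveryEvidence_le_of_forall_le (e : α → β) {F : Multiset β → γ}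
    (hF : ∀ s t : Multiset β, Multiset.Rel (· ≤ ·) s t → F s ≤ F t)
    {T : Finset α} (hT : ∀ x ∉ T, ∀ y ∈ T, e x ≤ e y) (j : ℕ) (R : Finset α) (hR : #R = #T) :
    discoveryEvidence e F R j ≤ discoveryEvidence e F T j := by
  obtain hTR | ⟨y, hy⟩ := (T \ R).eq_empty_or_nonempty
  · rw [eq_of_subset_of_card_le (sdiff_eq_empty_iff_subset.1 hTR) hR.le]
  obtain ⟨x, hx⟩ : (R \ T).Nonempty := by
    rw [← card_pos, card_sdiff_comm hR]
    exact card_pos.2 ⟨y, hy⟩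
  obtain ⟨hxR, hxT⟩ := mem_sdiff.1 hx
  obtain ⟨hyT, hyR⟩ := mem_sdiff.1 hy
  set σ := Equiv.swap x y
  have hdecrease : #(T \ R.map σ.toEmbedding) < #(T \ R) := by
    refine (card_le_card fun z hz => ?_).trans_lt (card_erase_lt_of_mem hy)
    simp only [mem_sdiff, mem_map_equiv, mem_erase] at hz ⊢
    have hzy : z ≠ y := by rintro rfl; exact hz.2 (by simpa [σ] using hxR)
    have hzx : z ≠ x := ne_of_mem_of_not_mem hz.1 hxT
    simpa [σ, Equiv.swap_apply_of_ne_of_ne hzx hzy, hzy] using hz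
  calc discoveryEvidence e F R j
      ≤ discoveryEvidence e F (R.map σ.toEmbedding) j :=
        discoveryEvidence_le_map_swap e hF hxR hyR (hT x hxT y hyT) j
    _ ≤ discoveryEvidence e F T j :=
        discoveryEvidence_le_of_forall_le e hF hT j _ (by rw [card_map, hR])
termination_by #(T \ R)

theorem Fin.card_filter_sub_le_val {K r : ℕ} (hrK : r ≤ K) :
    #{i : Fin K | K - r ≤ (i : ℕ)} = r := by
  have := card_filter_add_card_filter_not (s := (univ : Finset (Fin K)))
    (fun i : Fin K => (i : ℕ) < K - r)
  simp only [not_lt, card_univ, Fintype.card_fin, Fin.card_filter_val_lt] at this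
  omega

theorem top_rejection_set_optimal_general
    (K : ℕ) (e : Fin K → ℝ≥0∞) (hmono : Monotone e)
    (F : Multiset ℝ≥0∞ → ℝ≥0∞)
    (hF : ∀ s t : Multiset ℝ≥0∞, Multiset.Rel (· ≤ ·) s t → F s ≤ F t)
    (r : ℕ) (hrK : r ≤ K)
    (R : Finset (Fin K)) (hR : R.card = r) (j : ℕ) :
    (⨅ I ∈ {I : Finset (Fin K) | (R \ I).card < j}, F (I.val.map e)) ≤
      ⨅ I ∈ {I : Finset (Fin K) |
          ((Finset.univ.filter (fun i : Fin K => K - r ≤ (i : ℕ))) \ I).card < j},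
        F (I.val.map e) := by
  refine discoveryEvidence_le_of_forall_le e hF (fun x hx y hy => hmono ?_) j R
    (by rw [hR, Fin.card_filter_sub_le_val hrK])
  simp only [mem_filter, mem_univ, true_and, not_le] at hx hy
  exact Fin.le_def.2 (by omega)

/-- Optimality of the rejection set consisting of the `r` largest e-values:
if `e` is sorted in ascending order and `F` is symmetric (it acts on multisets)
and increasing in each argument, then for the set `R_r` of the `r` indices with
the largest e-values (the top `r` indices of `Fin K`) and any rejection set `R`
of size `r`, `D_{e,F}^R(j) ≤ D_{e,F}^{R_r}(j)` for every positive `j`. -/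
theorem top_rejection_set_optimal
    (K : ℕ) (hK : 2 ≤ K) (e : Fin K → ℝ≥0∞) (hmono : Monotone e)
    (F : Multiset ℝ≥0∞ → ℝ≥0∞)
    (hF : ∀ s t : Multiset ℝ≥0∞, Multiset.Rel (· ≤ ·) s t → F s ≤ F t)
    (r : ℕ) (hr1 : 1 ≤ r) (hrK : r ≤ K)
    (R : Finset (Fin K)) (hR : R.card = r) (j : ℕ) (hj : 0 < j) :
    (⨅ I ∈ {I : Finset (Fin K) | (R \ I).card < j}, F (I.val.map e)) ≤
      ⨅ I ∈ {I : Finset (Fin K) |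
          ((Finset.univ.filter (fun i : Fin K => K - r ≤ (i : ℕ))) \ I).card < j},
        F (I.val.map e) :=
  top_rejection_set_optimal_general K e hmono F hF r hrK R hR j
end
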